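/- Suppose n ≥ 2, d ≥ 2, and there exists an additive self-orthogonal code C ⊆ GF(4)ⁿ with |C| = 2^{n−k} such that every nonzero vector of C⊥ has Hamming weight at least d (a pure code). Then there exists an additive self-orthogonal code B ⊆ GF(4)^{n−1} with |B| = 2^{(n−1)−(k+1)} such that every vector of B⊥ ∖ B has Hamming weight at least d − 1. (If a pure [[n,k,d]] code exists with n ≥ 2, then an [[n−1, k+1, d−1]] code exists.) -/

import Mathlib

noncomputable section

open Finset Polynomial

/-- The field `GF(4)` with four elements. -/
abbrev F4 := GaloisField 2 2

/-- The trace inner product `u∗v = Σⱼ (uⱼ v̄ⱼ + ūⱼ vⱼ)` on `GF(4)ⁿ`,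
where conjugation is `x̄ = x²`.  It takes values in the prime subfield. -/
def trIP {n : ℕ} (u v : Fin n → F4) : F4 :=
  ∑ j, (u j * (v j) ^ 2 + (u j) ^ 2 * v j)

/-- The Hamming weight of a vector in `GF(4)ⁿ`. -/
def wt {n : ℕ} (u : Fin n → F4) : ℕ := Set.ncard {j | u j ≠ 0}

/-- The dual of a code with respect to the trace inner product. -/
def trDual {n : ℕ} (C : Set (Fin n → F4)) : Set (Fin n → F4) :=
  {u | ∀ v ∈ C, trIP u v = 0}

/-- An [[n,k,d]] quantum code exists (in the additive sense): there is an
additive self-orthogonal code C ⊆ GF(4)ⁿ with |C| = 2^(n-k) such that every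
vector of C⊥ ∖ C has Hamming weight at least d. -/
def QCodeExists (n k d : ℕ) : Prop :=
  ∃ C : AddSubgroup (Fin n → F4),
    (C : Set (Fin n → F4)) ⊆ trDual (C : Set (Fin n → F4)) ∧
    Nat.card C = 2 ^ (n - k) ∧
    ∀ v ∈ trDual (C : Set (Fin n → F4)) \ (C : Set (Fin n → F4)), d ≤ wt v

/-! ### Basic facts about `GF(4)` -/

lemma F4.two_eq_zero : (2:F4) = 0 := by
  have := CharP.cast_eq_zero F4 2; exact_mod_cast this

lemma F4.card : Nat.card F4 = 4 := by
  have := GaloisField.card 2 2 (by norm_num); simpa using this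

lemma F4.sq_add (x y : F4) : (x + y)^2 = x^2 + y^2 := by
  rw [add_pow_char]

lemma F4.pow4 (x : F4) : x^4 = x := by
  haveI : Fintype F4 := Fintype.ofFinite F4
  have hc : Fintype.card F4 = 4 := by
    rw [← Nat.card_eq_fintype_card]; exact F4.card
  have := FiniteField.pow_card x
  rwa [hc] at this

lemma F4.add_self (x : F4) : x + x = 0 := by
  have : (2:F4) * x = 0 := by rw [F4.two_eq_zero, zero_mul]
  linear_combination this

open scoped Classical in
/-- trace to ZMod 2 -/
def tr2 (x : F4) : ZMod 2 := if x + x^2 = 0 then 0 else 1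

lemma tr2_of_zero {x : F4} (h : x + x^2 = 0) : tr2 x = 0 := by unfold tr2; simp [h]
lemma tr2_of_ne {x : F4} (h : x + x^2 ≠ 0) : tr2 x = 1 := by unfold tr2; simp [h]
lemma tr2_eq_zero_iff {x : F4} : tr2 x = 0 ↔ x + x^2 = 0 := by
  unfold tr2; split <;> simp_all

lemma tr_mem {x : F4} : x + x^2 = 0 ∨ x + x^2 = 1 := by
  set t := x + x^2 with ht
  have h2 : t^2 = t := by
    rw [ht, F4.sq_add, ← pow_mul]
    norm_num
    rw [F4.pow4]; ring
  have : t * (t - 1) = 0 := by ring_nf; linear_combination h2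
  rcases mul_eq_zero.mp this with h | h
  · left; exact h
  · right; linear_combination h

lemma tr2_add (x y : F4) : tr2 (x + y) = tr2 x + tr2 y := by
  have hxy : (x+y) + (x+y)^2 = (x + x^2) + (y + y^2) := by
    rw [F4.sq_add]; ring
  rcases tr_mem (x := x) with hx | hx <;> rcases tr_mem (x := y) with hy | hy
  · rw [tr2_of_zero hx, tr2_of_zero hy, tr2_of_zero (by rw [hxy, hx, hy, add_zero])]
    decide
  · rw [tr2_of_zero hx, tr2_of_ne (by rw [hxy, hx, hy, zero_add]; exact one_ne_zero),
      tr2_of_ne (by rw [hy]; exact one_ne_zero)]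
    decide
  · rw [tr2_of_zero hy, tr2_of_ne (by rw [hxy, hx, hy, add_zero]; exact one_ne_zero),
      tr2_of_ne (by rw [hx]; exact one_ne_zero)]
    decide
  · rw [tr2_of_zero (by rw [hxy, hx, hy]; exact F4.add_self 1),
      tr2_of_ne (by rw [hx]; exact one_ne_zero),
      tr2_of_ne (by rw [hy]; exact one_ne_zero)]
    decide

lemma tr2_zero : tr2 0 = 0 := by
  have := tr2_add 0 0
  rw [add_zero] at this
  exact (left_eq_add.mp this)

lemma F4.sq_surj : Function.Surjective (fun x : F4 => x^2) := by
  have hinj : Function.Injective (fun x : F4 => x^2) := by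
    intro a b h
    simp only at h
    have h2 : (a - b)^2 = 0 := by
      have hs : (a + (-b))^2 = a^2 + (-b)^2 := F4.sq_add a (-b)
      have hb2 : (-b)^2 = b^2 := by ring
      rw [hb2] at hs
      calc (a-b)^2 = (a + -b)^2 := by ring
        _ = a^2 + b^2 := hs
        _ = 0 := by rw [h]; exact F4.add_self _
    have := pow_eq_zero_iff (n := 2) (by norm_num) |>.mp h2
    exact sub_eq_zero.mp this
  exact Finite.surjective_of_injective hinj

lemma exists_tr2_one : ∃ y : F4, tr2 y = 1 := by
  by_contra hc
  push_neg at hc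
  have h0 : ∀ y : F4, y + y^2 = 0 := by
    intro y
    by_contra h
    exact hc y (tr2_of_ne h)
  have hall : ∀ y : F4, y = 0 ∨ y = 1 := by
    intro y
    have : y * (1 + y) = 0 := by linear_combination h0 y
    rcases mul_eq_zero.mp this with h | h
    · left; exact h
    · right; linear_combination h - F4.add_self 1
  classical
  have hinj : Function.Injective (fun y : F4 => (if y = 0 then (0:Fin 2) else 1)) := by
    intro a b hab
    rcases hall a with ha | ha <;> rcases hall b with hb | hb <;>
      subst ha <;> subst hb <;> simp_all
  have := Nat.card_le_card_of_injective _ hinj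
  simp [F4.card, Nat.card_eq_fintype_card] at this

/-! ### The trace bilinear form over `ZMod 2` -/

def sip {n : ℕ} (u v : Fin n → F4) : F4 := ∑ j, u j * (v j)^2

lemma sip_add_left {n} (u u' v : Fin n → F4) : sip (u + u') v = sip u v + sip u' v := by
  unfold sip; rw [← Finset.sum_add_distrib]; congr 1; ext j; simp [add_mul]

lemma sip_add_right {n} (u v v' : Fin n → F4) : sip u (v + v') = sip u v + sip u v' := by
  unfold sip; rw [← Finset.sum_add_distrib]; congr 1; ext j
  simp only [Pi.add_apply]
  rw [F4.sq_add]; ring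

lemma sip_zero_left {n} (v : Fin n → F4) : sip 0 v = 0 := by simp [sip]
lemma sip_zero_right {n} (u : Fin n → F4) : sip u 0 = 0 := by simp [sip]

lemma sip_sq {n} (u v : Fin n → F4) : (sip u v)^2 = sip v u := by
  unfold sip
  rw [sum_pow_char]
  congr 1; ext j
  rw [mul_pow, ← pow_mul]
  norm_num
  rw [F4.pow4]; ring

/-- The trace bilinear form over ZMod 2. -/
def bf (n : ℕ) : LinearMap.BilinForm (ZMod 2) (Fin n → F4) :=
  LinearMap.mk₂' (ZMod 2) (ZMod 2) (fun u v => tr2 (sip u v))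
    (fun u u' v => by show tr2 (sip (u + u') v) = _; rw [sip_add_left, tr2_add])
    (fun c u v => by
      fin_cases c
      · show tr2 (sip ((0 : ZMod 2) • u) v) = (0 : ZMod 2) • tr2 (sip u v)
        rw [zero_smul, zero_smul, sip_zero_left, tr2_zero]
      · show tr2 (sip ((1 : ZMod 2) • u) v) = (1 : ZMod 2) • tr2 (sip u v)
        rw [one_smul, one_smul])
    (fun u v v' => by show tr2 (sip u (v + v')) = _; rw [sip_add_right, tr2_add])
    (fun c u v => by
      fin_cases c
      · show tr2 (sip u ((0 : ZMod 2) • v)) = (0 : ZMod 2) • tr2 (sip u v)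
        rw [zero_smul, zero_smul, sip_zero_right, tr2_zero]
      · show tr2 (sip u ((1 : ZMod 2) • v)) = (1 : ZMod 2) • tr2 (sip u v)
        rw [one_smul, one_smul])

lemma bf_apply {n} (u v : Fin n → F4) : bf n u v = tr2 (sip u v) := rfl

lemma tr2_sq (x : F4) : tr2 (x^2) = tr2 x := by
  have key : x^2 + (x^2)^2 = x + x^2 := by
    rw [← pow_mul]
    norm_num
    rw [F4.pow4]; ring
  rcases em (x + x^2 = 0) with h | h
  · rw [tr2_eq_zero_iff.mpr (by rw [key]; exact h), tr2_eq_zero_iff.mpr h]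
  · rw [tr2_of_ne (by rw [key]; exact h), tr2_of_ne h]

lemma bf_symm {n} (u v : Fin n → F4) : bf n u v = bf n v u := by
  rw [bf_apply, bf_apply, ← sip_sq u v, tr2_sq]

lemma bf_isRefl {n} : (bf n).IsRefl := fun u v h => by rw [bf_symm]; exact h

lemma bf_eq_zero_iff_trIP {n} (u v : Fin n → F4) : bf n u v = 0 ↔ trIP u v = 0 := by
  have h : trIP u v = sip u v + (sip u v)^2 := by
    unfold trIP
    rw [sip_sq]
    unfold sip
    rw [← Finset.sum_add_distrib]
    congr 1; ext j; ring
  rw [bf_apply, tr2_eq_zero_iff, h]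

lemma bf_nondeg {n} : (bf n).Nondegenerate := by
  refine (LinearMap.IsRefl.nondegenerate_iff_separatingLeft bf_isRefl).mpr ?_
  intro u hu
  by_contra h0
  obtain ⟨j, hj⟩ := Function.ne_iff.mp h0
  have hj' : u j ≠ 0 := by simpa using hj
  obtain ⟨y, hy⟩ := exists_tr2_one
  obtain ⟨a, ha⟩ := F4.sq_surj (y / u j)
  simp only at ha
  have hthis := hu (Pi.single j a)
  rw [bf_apply] at hthis
  have hs : sip u (Pi.single j a) = u j * a^2 := by
    unfold sip
    rw [Finset.sum_eq_single j]
    · simp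
    · intro b _ hb; simp [Pi.single_eq_of_ne hb]
    · simp
  have hval : u j * a^2 = y := by rw [ha]; field_simp
  rw [hs, hval, hy] at hthis
  exact one_ne_zero hthis

/-! ### Cardinality and duality -/

open Module

lemma finrank_V (n : ℕ) : finrank (ZMod 2) (Fin n → F4) = 2 * n := by
  rw [Module.finrank_pi_fintype]
  simp [GaloisField.finrank 2 (n := 2) (by norm_num)]
  ring

lemma card_submodule {n : ℕ} (W : Submodule (ZMod 2) (Fin n → F4)) :
    Nat.card W = 2 ^ finrank (ZMod 2) W := by
  haveI : Fintype W := Fintype.ofFinite W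
  rw [Nat.card_eq_fintype_card, card_eq_pow_finrank (K := ZMod 2), ZMod.card]

/-- trDual of a submodule is the bf-orthogonal complement. -/
lemma trDual_eq_orthogonal {n : ℕ} (W : Submodule (ZMod 2) (Fin n → F4)) :
    trDual (W : Set (Fin n → F4)) = ((bf n).orthogonal W : Set (Fin n → F4)) := by
  ext u
  constructor
  · intro hu v hv
    show bf n v u = 0
    rw [bf_symm, bf_eq_zero_iff_trIP]
    exact hu v hv
  · intro hu v hv
    have : bf n v u = 0 := hu v hv
    rw [bf_symm] at this
    exact (bf_eq_zero_iff_trIP u v).mp this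

lemma finrank_orth {n : ℕ} (W : Submodule (ZMod 2) (Fin n → F4)) :
    finrank (ZMod 2) ((bf n).orthogonal W) = 2 * n - finrank (ZMod 2) W := by
  rw [LinearMap.BilinForm.finrank_orthogonal bf_nondeg, finrank_V]

/-! ### Weights -/

lemma wt_zero {n : ℕ} : wt (0 : Fin n → F4) = 0 := by
  unfold wt; simp

lemma wt_le_of_proj {m : ℕ} (v : Fin (m+1) → F4) (u : Fin m → F4)
    (h : ∀ i, v i.castSucc = u i) : wt v ≤ wt u + 1 := by
  unfold wt
  have hsub : {j : Fin (m+1) | v j ≠ 0} ⊆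
      (Fin.castSucc '' {j | u j ≠ 0}) ∪ {Fin.last m} := by
    intro j hj
    rcases Fin.eq_castSucc_or_eq_last j with ⟨i, rfl⟩ | rfl
    · left
      exact ⟨i, by show u i ≠ 0; rw [← h i]; exact hj, rfl⟩
    · right; rfl
  calc Set.ncard {j : Fin (m+1) | v j ≠ 0}
      ≤ Set.ncard ((Fin.castSucc '' {j | u j ≠ 0}) ∪ {Fin.last m}) :=
        Set.ncard_le_ncard hsub (Set.toFinite _)
    _ ≤ Set.ncard (Fin.castSucc '' {j | u j ≠ 0}) + Set.ncard ({Fin.last m} : Set (Fin (m+1))) :=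
        Set.ncard_union_le _ _
    _ = wt u + 1 := by
        rw [Set.ncard_image_of_injective _ (Fin.castSucc_injective m), Set.ncard_singleton]
        rfl

/-! ### Snoc-related linear maps -/

lemma sip_succ {m : ℕ} (v w : Fin (m+1) → F4) :
    sip v w = sip (v ∘ Fin.castSucc) (w ∘ Fin.castSucc)
      + v (Fin.last m) * (w (Fin.last m))^2 := by
  unfold sip
  rw [Fin.sum_univ_castSucc]
  rfl

def iota (m : ℕ) : F4 →ₗ[ZMod 2] (Fin (m+1) → F4) where
  toFun a := Fin.snoc 0 a
  map_add' a b := by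
    funext j
    rcases Fin.eq_castSucc_or_eq_last j with ⟨i, rfl⟩ | rfl <;> simp
  map_smul' c a := by
    funext j
    rcases Fin.eq_castSucc_or_eq_last j with ⟨i, rfl⟩ | rfl <;> simp

lemma iota_castSucc {m : ℕ} (a : F4) (i : Fin m) : iota m a i.castSucc = 0 := by
  show (Fin.snoc 0 a : Fin (m+1) → F4) i.castSucc = 0
  simp

lemma iota_last {m : ℕ} (a : F4) : iota m a (Fin.last m) = a := by
  show (Fin.snoc 0 a : Fin (m+1) → F4) (Fin.last m) = a
  simp

lemma iota_inj {m : ℕ} : Function.Injective (iota m) := by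
  intro a b h
  have := congrFun h (Fin.last m)
  rwa [iota_last, iota_last] at this

lemma sip_iota {m : ℕ} (a : F4) (v : Fin (m+1) → F4) :
    sip (iota m a) v = a * (v (Fin.last m))^2 := by
  rw [sip_succ]
  have h1 : (iota m a) ∘ Fin.castSucc = (0 : Fin m → F4) := by
    funext i; exact iota_castSucc a i
  rw [h1, sip_zero_left, iota_last, zero_add]

lemma sip_one (u v : Fin 1 → F4) : sip u v = u 0 * (v 0)^2 := by
  unfold sip; exact Fin.sum_univ_one _

/-- the map `F4 → (Fin 1 → F4)`. -/
def psi : F4 →ₗ[ZMod 2] (Fin 1 → F4) := LinearMap.pi fun _ => LinearMap.id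

lemma psi_inj : Function.Injective psi := by
  intro a b h
  exact congrFun h 0

lemma F4.finrank2 : finrank (ZMod 2) F4 = 2 := GaloisField.finrank 2 (by norm_num)

/-- The projection onto the last coordinate, restricted to a pure self-dual-contained code,
is surjective. -/
lemma range_last_eq_top {m d : ℕ} (hd : 2 ≤ d) (W : Submodule (ZMod 2) (Fin (m+1) → F4))
    (hpure : ∀ v ∈ trDual (W : Set (Fin (m+1) → F4)), v ≠ 0 → d ≤ wt v) :
    LinearMap.range ((LinearMap.proj (Fin.last m) :
      (Fin (m+1) → F4) →ₗ[ZMod 2] F4).domRestrict W) = ⊤ := by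
  set L : (Fin (m+1) → F4) →ₗ[ZMod 2] F4 := LinearMap.proj (Fin.last m) with hL
  by_contra hne
  set Rng := LinearMap.range (L.domRestrict W) with hRng
  have hlt : finrank (ZMod 2) Rng < 2 := by
    have := Submodule.finrank_lt hne
    rwa [F4.finrank2] at this
  set R' := Submodule.map psi Rng with hR'
  have hR'fr : finrank (ZMod 2) R' = finrank (ZMod 2) Rng :=
    (LinearEquiv.finrank_eq (Submodule.equivMapOfInjective psi psi_inj Rng)).symm
  have horth : 0 < finrank (ZMod 2) ((bf 1).orthogonal R') := by
    rw [finrank_orth, hR'fr]; omega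
  have hnebot : (bf 1).orthogonal R' ≠ ⊥ := by
    intro h
    rw [h, finrank_bot] at horth
    omega
  obtain ⟨x, hx, hx0⟩ := Submodule.exists_mem_ne_zero_of_ne_bot hnebot
  set a := x 0 with ha
  have ha0 : a ≠ 0 := by
    intro h
    apply hx0
    funext j
    have hj : j = 0 := Subsingleton.elim j 0
    subst hj
    show x 0 = 0
    rw [← ha]; exact h
  have key : ∀ b ∈ Rng, tr2 (a * b^2) = 0 := by
    intro b hb
    have hmem : psi b ∈ R' := Submodule.mem_map_of_mem hb
    have h1 : bf 1 (psi b) x = 0 := hx (psi b) hmem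
    rw [bf_symm, bf_apply, sip_one] at h1
    exact h1
  have hmemD : iota m a ∈ trDual (W : Set (Fin (m+1) → F4)) := by
    intro v hv
    rw [← bf_eq_zero_iff_trIP, bf_apply, sip_iota]
    exact key (v (Fin.last m)) ⟨⟨v, hv⟩, rfl⟩
  have hne0 : iota m a ≠ 0 := fun h => ha0 (by rw [← iota_last (m := m) a, h]; rfl)
  have hwt : wt (iota m a) ≤ 1 := by
    have := wt_le_of_proj (iota m a) 0 (fun i => (iota_castSucc a i).trans rfl)
    rwa [wt_zero] at this
  have := hpure _ hmemD hne0
  omega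


/-- If a pure [[n,k,d]] code exists with n ≥ 2, then an [[n-1,k+1,d-1]] code
exists. -/
theorem qcode_pure_shorten (n k d : ℕ) (hn : 2 ≤ n) (hd : 2 ≤ d) (hkn : k ≤ n)
    (h : ∃ C : AddSubgroup (Fin n → F4),
      (C : Set (Fin n → F4)) ⊆ trDual (C : Set (Fin n → F4)) ∧
      Nat.card C = 2 ^ (n - k) ∧
      ∀ v ∈ trDual (C : Set (Fin n → F4)), v ≠ 0 → d ≤ wt v) :
    QCodeExists (n - 1) (k + 1) (d - 1) := by
  obtain ⟨C, hCso, hCcard, hCpure⟩ := h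
  obtain ⟨m, rfl⟩ : ∃ m, n = m + 1 := ⟨n - 1, by omega⟩
  show QCodeExists m (k+1) (d-1)
  set W : Submodule (ZMod 2) (Fin (m+1) → F4) := AddSubgroup.toZModSubmodule 2 C with hW
  have hWset : (W : Set (Fin (m+1) → F4)) = (C : Set (Fin (m+1) → F4)) := rfl
  set L : (Fin (m+1) → F4) →ₗ[ZMod 2] F4 := LinearMap.proj (Fin.last m) with hL
  set π : (Fin (m+1) → F4) →ₗ[ZMod 2] (Fin m → F4) :=
    LinearMap.funLeft (ZMod 2) F4 Fin.castSucc with hπ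
  have hπ_apply : ∀ v : Fin (m+1) → F4, π v = v ∘ Fin.castSucc := fun _ => rfl
  have hrng : LinearMap.range (L.domRestrict W) = ⊤ :=
    range_last_eq_top hd W (by rw [hWset]; exact hCpure)
  set K0 : Submodule (ZMod 2) (Fin (m+1) → F4) := W ⊓ LinearMap.ker L with hK0def
  set B : Submodule (ZMod 2) (Fin m → F4) := K0.map π with hB
  set r := finrank (ZMod 2) W with hrdef
  -- rank computations
  have hrfin : r = 2 + finrank (ZMod 2) (LinearMap.ker (L.domRestrict W)) := by
    have h1 := LinearMap.finrank_range_add_finrank_ker (L.domRestrict W)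
    rw [hrng, finrank_top, F4.finrank2] at h1
    omega
  have hK0fr : finrank (ZMod 2) K0 = finrank (ZMod 2) (LinearMap.ker (L.domRestrict W)) := by
    have heq : K0 = (LinearMap.ker (L.domRestrict W)).map W.subtype := by
      have : LinearMap.ker (L.domRestrict W) = Submodule.comap W.subtype (LinearMap.ker L) :=
        LinearMap.ker_comp W.subtype L
      rw [this, Submodule.map_comap_subtype]
    rw [heq, Submodule.finrank_map_subtype_eq]
  have hcardW : Nat.card W = Nat.card C :=
    Nat.card_congr ⟨fun x => ⟨x.1, x.2⟩, fun x => ⟨x.1, x.2⟩, fun _ => rfl, fun _ => rfl⟩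
  have hr : r = m + 1 - k := by
    refine Nat.pow_right_injective (le_refl 2) ?_
    show 2 ^ r = 2 ^ (m + 1 - k)
    rw [hrdef, ← card_submodule, hcardW, hCcard]
  have hr2 : 2 ≤ r := by omega
  have hrle : r ≤ 2 * (m+1) := by
    have := Submodule.finrank_le W
    rwa [finrank_V] at this
  have hK0r : finrank (ZMod 2) K0 = r - 2 := by omega
  -- injectivity of π on K0
  have hinjK : Set.InjOn π (K0 : Set (Fin (m+1) → F4)) := by
    intro x hx y hy hxy
    funext j
    rcases Fin.eq_castSucc_or_eq_last j with ⟨i, rfl⟩ | rfl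
    · have := congrFun hxy i
      rw [hπ_apply, hπ_apply] at this
      exact this
    · have hx' : x (Fin.last m) = 0 := (Submodule.mem_inf.mp hx).2
      have hy' : y (Fin.last m) = 0 := (Submodule.mem_inf.mp hy).2
      rw [hx', hy']
  -- cardinality of B
  have hBcard : Nat.card B = 2 ^ (r - 2) := by
    have hset : (B : Set (Fin m → F4)) = π '' (K0 : Set (Fin (m+1) → F4)) :=
      Submodule.map_coe π K0
    have h1 : Nat.card B = Nat.card K0 :=
      Nat.card_congr ((Equiv.setCongr hset).trans
        (Equiv.Set.imageOfInjOn π (K0 : Set (Fin (m+1) → F4)) hinjK).symm)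
    rw [h1, card_submodule, hK0r]
  -- self-orthogonality of B
  have hBso : (B : Set (Fin m → F4)) ⊆ trDual (B : Set (Fin m → F4)) := by
    intro b1 hb1 b2 hb2
    obtain ⟨v1, hv1, rfl⟩ := Submodule.mem_map.mp hb1
    obtain ⟨v2, hv2, rfl⟩ := Submodule.mem_map.mp hb2
    rw [← bf_eq_zero_iff_trIP, bf_apply]
    have hlast2 : v2 (Fin.last m) = 0 := (Submodule.mem_inf.mp hv2).2
    have hsips : sip (π v1) (π v2) = sip v1 v2 := by
      rw [sip_succ v1 v2, hlast2, hπ_apply, hπ_apply]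
      simp
    rw [hsips]
    have h1 : trIP v1 v2 = 0 := hCso (Submodule.mem_inf.mp hv1).1 v2 (Submodule.mem_inf.mp hv2).1
    rw [← bf_eq_zero_iff_trIP, bf_apply] at h1
    exact h1
  -- the orthogonal decomposition
  set OC : Submodule (ZMod 2) (Fin (m+1) → F4) := (bf (m+1)).orthogonal K0 with hOC
  set OW : Submodule (ZMod 2) (Fin (m+1) → F4) := (bf (m+1)).orthogonal W with hOW
  set I4 : Submodule (ZMod 2) (Fin (m+1) → F4) := LinearMap.range (iota m) with hI4
  have hle : OW ⊔ I4 ≤ OC := by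
    apply sup_le
    · exact LinearMap.BilinForm.orthogonal_le inf_le_left
    · rintro _ ⟨a, rfl⟩ v hv
      show bf (m+1) v (iota m a) = 0
      rw [bf_symm, bf_apply, sip_iota]
      have hvl : v (Fin.last m) = 0 := (Submodule.mem_inf.mp hv).2
      rw [hvl]
      norm_num
      exact tr2_zero
  have hI4fr : finrank (ZMod 2) I4 = 2 := by
    have h2 := LinearEquiv.finrank_eq (LinearEquiv.ofInjective (iota m) iota_inj)
    rw [F4.finrank2] at h2
    exact h2.symm
  have hdisj : OW ⊓ I4 = ⊥ := by
    rw [eq_bot_iff]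
    rintro x ⟨hxO, a, rfl⟩
    by_cases ha : a = 0
    · rw [ha, map_zero]; exact Submodule.zero_mem ⊥
    exfalso
    have hmem : iota m a ∈ trDual (C : Set (Fin (m+1) → F4)) := by
      rw [← hWset, trDual_eq_orthogonal]
      exact hxO
    have hne : iota m a ≠ 0 := fun h => ha (by rw [← iota_last (m := m) a, h]; rfl)
    have hwt : wt (iota m a) ≤ 1 := by
      have := wt_le_of_proj (iota m a) 0 (fun i => (iota_castSucc a i).trans rfl)
      rwa [wt_zero] at this
    have := hCpure _ hmem hne
    omega
  have hsupfr : finrank (ZMod 2) OC ≤ finrank (ZMod 2) (OW ⊔ I4 : Submodule (ZMod 2) _) := by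
    have h1 := Submodule.finrank_sup_add_finrank_inf_eq OW I4
    rw [hdisj, finrank_bot, add_zero, hI4fr] at h1
    have h2 : finrank (ZMod 2) OC = 2 * (m+1) - (r - 2) := by
      rw [hOC, finrank_orth, hK0r]
    have h3 : finrank (ZMod 2) OW = 2 * (m+1) - r := by
      rw [hOW, finrank_orth]
    omega
  have hOCeq : OW ⊔ I4 = OC := Submodule.eq_of_le_of_finrank_le hle hsupfr
  -- assemble
  refine ⟨B.toAddSubgroup, hBso, ?_, ?_⟩
  · show Nat.card B = 2 ^ (m - (k+1))
    rw [hBcard]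
    congr 1
    omega
  · rintro u' ⟨hu'd, hu'nB⟩
    have hu'0 : u' ≠ 0 := fun h0 => hu'nB (by rw [h0]; exact Submodule.zero_mem B)
    have hext : (Fin.snoc u' 0 : Fin (m+1) → F4) ∈ OC := by
      intro v hv
      show bf (m+1) v _ = 0
      rw [bf_symm, bf_apply]
      have hsnoc : (Fin.snoc u' (0:F4) : Fin (m+1) → F4) ∘ Fin.castSucc = u' := by
        funext i; simp
      have hsl : (Fin.snoc u' (0:F4) : Fin (m+1) → F4) (Fin.last m) = 0 := by simp
      rw [sip_succ, hsnoc, hsl]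
      simp only [zero_mul, add_zero]
      have hπv : π v ∈ B := Submodule.mem_map_of_mem hv
      have h2 : trIP u' (π v) = 0 := hu'd (π v) hπv
      rw [← bf_eq_zero_iff_trIP, bf_apply, hπ_apply] at h2
      exact h2
    rw [← hOCeq] at hext
    obtain ⟨c, hc, z, hz, hsum⟩ := Submodule.mem_sup.mp hext
    obtain ⟨a, rfl⟩ := hz
    have hcC : c ∈ trDual (C : Set (Fin (m+1) → F4)) := by
      rw [← hWset, trDual_eq_orthogonal]
      exact hc
    have hproj : ∀ i : Fin m, c i.castSucc = u' i := by
      intro i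
      have h3 := congrFun hsum i.castSucc
      have h4 : (Fin.snoc u' (0:F4) : Fin (m+1) → F4) i.castSucc = u' i := by simp
      rw [h4] at h3
      have h5 : (c + iota m a) i.castSucc = c i.castSucc + iota m a i.castSucc := rfl
      rw [h5, iota_castSucc, add_zero] at h3
      exact h3
    have hc0 : c ≠ 0 := by
      intro h0
      apply hu'0
      funext i
      rw [← hproj i, h0]
      rfl
    have hdc := hCpure c hcC hc0
    have hwtc := wt_le_of_proj c u' hproj
    omega
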